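/- arXiv:1901.10288 — 3 statements merged into one kernel-verified Lean document; each statement's English description precedes it below -/
import Mathlib

section
/- Let I be an ideal of ℝ[x₁,…,xₙ] with finite variety such that I contains a square-free univariate polynomial in each variable xᵢ. Then I is a radical ideal. -/
/-!
Multiplication by a generator `xᵢ` on the finite-dimensional algebra `ℝ[x] ⧸ I` is killed by a
square-free polynomial, hence is a semisimple endomorphism. Over a perfect field, sums and products
of commuting semisimple endomorphisms are semisimple, so multiplication by every element of the
quotient is semisimple. A nilpotent semisimple endomorphism is zero, so the quotient is reduced.
-/

open MvPolynomial Polynomial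

namespace Algebra

variable {K A : Type*} [Field K]

section Ring

variable [Ring A] [Algebra K A]

theorem isSemisimple_lmul_of_squarefree_aeval_eq_zero {a : A} {p : K[X]} (hp : Squarefree p)
    (ha : aeval a p = 0) : (lmul K A a).IsSemisimple :=
  Module.End.isSemisimple_of_squarefree_aeval_eq_zero hp <| by
    rw [Polynomial.aeval_algHom_apply, ha, map_zero]

theorem isReduced_of_forall_isSemisimple_lmul (h : ∀ a : A, (lmul K A a).IsSemisimple) :
    IsReduced A where
  eq_zero a ha := by
    have hzero : lmul K A a = 0 :=
      Module.End.eq_zero_of_isNilpotent_isSemisimple (ha.map (lmul K A)) (h a)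
    simpa using LinearMap.congr_fun hzero 1

end Ring

section CommRing

variable [CommRing A] [Algebra K A]

theorem isSemisimple_lmul_of_mem_adjoin [PerfectField K] [FiniteDimensional K A] {s : Set A}
    (hs : ∀ a ∈ s, (lmul K A a).IsSemisimple) {a : A} (ha : a ∈ adjoin K s) :
    (lmul K A a).IsSemisimple := by
  have hcomm (b c : A) : Commute (lmul K A b) (lmul K A c) := by
    rw [Commute, SemiconjBy, ← map_mul, ← map_mul, mul_comm]
  induction ha using adjoin_induction with
  | mem b hb => exact hs b hb
  | algebraMap r =>
    rw [AlgHom.commutes, algebraMap_eq_smul_one]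
    exact Module.End.IsSemisimple_smul r Module.End.isSemisimple_id
  | add b c _ _ hb hc =>
    rw [map_add]
    exact hb.add_of_commute (hcomm b c) hc
  | mul b c _ _ hb hc =>
    rw [map_mul]
    exact hb.mul_of_commute (hcomm b c) hc

theorem isReduced_of_adjoin_eq_top_of_squarefree [PerfectField K] {s : Set A} (hs : s.Finite)
    (hA : adjoin K s = ⊤) (h : ∀ a ∈ s, ∃ p : K[X], Squarefree p ∧ aeval a p = 0) :
    IsReduced A := by
  have hint : ∀ a ∈ s, IsIntegral K a := fun a ha ↦
    let ⟨p, hp, hpa⟩ := h a ha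
    _root_.IsAlgebraic.isIntegral ⟨p, hp.ne_zero, hpa⟩
  have : FiniteDimensional K A := by
    have := finite_adjoin_of_finite_of_isIntegral hs hint
    rw [hA] at this
    exact .equiv Subalgebra.topEquiv.toLinearEquiv
  refine isReduced_of_forall_isSemisimple_lmul (K := K) fun a ↦
    isSemisimple_lmul_of_mem_adjoin (fun b hb ↦ ?_) (hA ▸ mem_top)
  obtain ⟨p, hp, hpb⟩ := h b hb
  exact isSemisimple_lmul_of_squarefree_aeval_eq_zero hp hpb

end CommRing

end Algebra

theorem MvPolynomial.adjoin_range_mkₐ_X {σ R : Type*} [CommRing R] (I : Ideal (MvPolynomial σ R)) :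
    Algebra.adjoin R (Set.range fun i ↦ Ideal.Quotient.mkₐ R I (X i)) = ⊤ := by
  rw [Set.range_comp' (Ideal.Quotient.mkₐ R I) X, ← AlgHom.map_adjoin, adjoin_range_X,
    Algebra.map_top, AlgHom.range_eq_top]
  exact Ideal.Quotient.mkₐ_surjective R I

theorem seidenberg_radical_general
    {n : ℕ} (I : Ideal (MvPolynomial (Fin n) ℝ))
    (hsf : ∀ i : Fin n, ∃ p : Polynomial ℝ, p ≠ 0 ∧ Squarefree p ∧
      Polynomial.aeval (X i : MvPolynomial (Fin n) ℝ) p ∈ I) :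
    I.IsRadical := by
  rw [Ideal.isRadical_iff_quotient_reduced]
  refine Algebra.isReduced_of_adjoin_eq_top_of_squarefree (K := ℝ) (Set.finite_range _)
    (adjoin_range_mkₐ_X I) ?_
  rintro _ ⟨i, rfl⟩
  obtain ⟨p, -, hp, hpI⟩ := hsf i
  refine ⟨p, hp, ?_⟩
  rw [Polynomial.aeval_algHom_apply, Ideal.Quotient.mkₐ_eq_mk, Ideal.Quotient.eq_zero_iff_mem]
  exact hpI

/-- Seidenberg's lemma. -/
theorem seidenberg_radical
    {n : ℕ} (I : Ideal (MvPolynomial (Fin n) ℝ))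
    (hfin : {z : Fin n → ℂ | ∀ f ∈ I, aeval z f = 0}.Finite)
    (hsf : ∀ i : Fin n, ∃ p : Polynomial ℝ, p ≠ 0 ∧ Squarefree p ∧
      Polynomial.aeval (X i : MvPolynomial (Fin n) ℝ) p ∈ I) :
    I.IsRadical :=
  seidenberg_radical_general I hsf
end

section
/- Let I ⊆ ℝ[x₁,…,xₙ] be a radical ideal with finite real variety V(I) ⊆ ℝⁿ, and let f be a polynomial that is nonnegative at every point of V(I). Then there exist polynomials s₁,…,s_d such that f − Σᵢ sᵢ² ∈ I. -/
/-!
The real points of `I` form a finite set `V`, so some polynomial `g` interpolates `√f` on `V`.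
Then `f - g²` vanishes on `V`, which is the whole complex variety of `I`; by the Nullstellensatz
`f - g²` lies in the radical of `I`, that is, in `I`. One square suffices.
-/

open MvPolynomial

namespace MvPolynomial

variable {σ K : Type*} [Field K]

lemma vanishingIdeal_singleton_injective :
    Function.Injective (fun x : σ → K => vanishingIdeal K {x}) := by
  intro x y hxy
  funext i
  have hx : X i - C (x i) ∈ vanishingIdeal K {x} := by simp
  have hy : X i - C (x i) ∈ vanishingIdeal K {y} := by simpa only [hxy] using hx
  simpa [sub_eq_zero, eq_comm] using hy

lemma exists_eval_eq_of_finite {S : Set (σ → K)} (hS : S.Finite) (c : (σ → K) → K) :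
    ∃ g : MvPolynomial σ K, ∀ x ∈ S, eval x g = c x := by
  have : Finite S := hS
  have hcoprime : Pairwise fun x y : S =>
      IsCoprime (vanishingIdeal K {x.1}) (vanishingIdeal K {y.1}) :=
    fun x y hxy => Ideal.isCoprime_iff_sup_eq.2 <| Ideal.IsMaximal.coprime_of_ne inferInstance
      inferInstance fun h => hxy (Subtype.ext (vanishingIdeal_singleton_injective h))
  obtain ⟨g, hg⟩ := Ideal.exists_forall_sub_mem_ideal hcoprime fun x => C (c x)
  refine ⟨g, fun x hx => ?_⟩
  simpa [mem_vanishingIdeal_singleton_iff, sub_eq_zero] using hg ⟨x, hx⟩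

variable {k : Type*} [Field k] [Algebra k K] {I : Ideal (MvPolynomial σ k)}

lemma comp_algebraMap_mem_zeroLocus_iff {x : σ → k} :
    algebraMap k K ∘ x ∈ zeroLocus K I ↔ x ∈ zeroLocus k I := by
  simp only [mem_zeroLocus_iff, aeval_algebraMap_eq_zero_iff]

lemma finite_zeroLocus_of_finite_zeroLocus (hI : (zeroLocus K I).Finite) :
    (zeroLocus k I).Finite :=
  (hI.preimage (Function.Injective.comp_left (algebraMap k K).injective).injOn).subset
    fun _ hx => comp_algebraMap_mem_zeroLocus_iff.2 hx

lemma mem_radical_of_forall_eval_eq_zero [IsAlgClosed K] [Finite σ]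
    (hrat : ∀ z ∈ zeroLocus K I, ∃ x : σ → k, algebraMap k K ∘ x = z)
    {p : MvPolynomial σ k} (hp : ∀ x ∈ zeroLocus k I, eval x p = 0) : p ∈ I.radical := by
  rw [← vanishingIdeal_zeroLocus_eq_radical (K := K)]
  intro z hz
  obtain ⟨x, rfl⟩ := hrat z hz
  rw [aeval_algebraMap_eq_zero_iff]
  exact hp x (comp_algebraMap_mem_zeroLocus_iff.1 hz)

end MvPolynomial

theorem nonneg_on_finite_real_variety_is_sos_mod_radical_ideal
    {n : ℕ} (I : Ideal (MvPolynomial (Fin n) ℝ))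
    (hrad : I.IsRadical)
    (hfin : {z : Fin n → ℂ | ∀ g ∈ I, aeval z g = 0}.Finite)
    (hreal : ∀ z : Fin n → ℂ, (∀ g ∈ I, aeval z g = 0) → ∀ i, (z i).im = 0)
    (f : MvPolynomial (Fin n) ℝ)
    (hf : ∀ z : Fin n → ℝ, (∀ g ∈ I, eval z g = 0) → 0 ≤ eval z f) :
    ∃ (d : ℕ) (s : Fin d → MvPolynomial (Fin n) ℝ),
      f - ∑ i, (s i) ^ 2 ∈ I := by
  obtain ⟨g, hg⟩ := exists_eval_eq_of_finite (finite_zeroLocus_of_finite_zeroLocus (k := ℝ) hfin)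
    fun x => √(eval x f)
  have hrat : ∀ z ∈ zeroLocus ℂ I, ∃ x : Fin n → ℝ, algebraMap ℝ ℂ ∘ x = z :=
    fun z hz => ⟨fun i => (z i).re, funext fun i => Complex.ext rfl (hreal z hz i).symm⟩
  have hvanish : ∀ x ∈ zeroLocus ℝ I, eval x (f - g ^ 2) = 0 := fun x hx => by
    simp [hg x hx, Real.sq_sqrt (hf x hx)]
  exact ⟨1, fun _ => g, by simpa using hrad (mem_radical_of_forall_eval_eq_zero hrat hvanish)⟩
end

section
/- Let I be a radical ideal of ℝ[x₁,…,xₙ] with finite real variety. If f and g are polynomials that agree at every point of V(I), then f − g ∈ I. -/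
/-! By the Nullstellensatz over `ℂ` for ideals of `ℝ[x₁,…,xₙ]`, `f - g` lies in `√I = I` as soon
as it vanishes at every complex zero of `I`. Those zeros are all real, and there `f = g`. -/

open MvPolynomial

theorem MvPolynomial.algebraMap_comp_mem_zeroLocus_iff {σ k K : Type*} [Field k] [Field K]
    [Algebra k K] {I : Ideal (MvPolynomial σ k)} {x : σ → k} :
    algebraMap k K ∘ x ∈ zeroLocus K I ↔ x ∈ zeroLocus k I := by
  simp only [mem_zeroLocus_iff, aeval_algebraMap_eq_zero_iff]

theorem eq_on_finite_real_variety_sub_mem_radical_ideal_general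
    {n : ℕ} (I : Ideal (MvPolynomial (Fin n) ℝ))
    (hrad : I.IsRadical)
    (hreal : ∀ z : Fin n → ℂ, (∀ g ∈ I, aeval z g = 0) → ∀ i, (z i).im = 0)
    (f g : MvPolynomial (Fin n) ℝ)
    (hfg : ∀ z : Fin n → ℝ, (∀ p ∈ I, eval z p = 0) → eval z f = eval z g) :
    f - g ∈ I := by
  rw [← hrad.radical, ← vanishingIdeal_zeroLocus_eq_radical (K := ℂ)]
  intro z hz
  obtain ⟨x, rfl⟩ : ∃ x : Fin n → ℝ, z = algebraMap ℝ ℂ ∘ x :=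
    ⟨fun i => (z i).re, funext fun i => Complex.ext rfl (by simp [hreal z hz i])⟩
  have hx := algebraMap_comp_mem_zeroLocus_iff.mp hz
  rw [aeval_algebraMap_eq_zero_iff, map_sub, sub_eq_zero]
  exact hfg x fun p hp => by simpa using hx p hp

theorem eq_on_finite_real_variety_sub_mem_radical_ideal
    {n : ℕ} (I : Ideal (MvPolynomial (Fin n) ℝ))
    (hrad : I.IsRadical)
    (hfin : {z : Fin n → ℂ | ∀ g ∈ I, aeval z g = 0}.Finite)
    (hreal : ∀ z : Fin n → ℂ, (∀ g ∈ I, aeval z g = 0) → ∀ i, (z i).im = 0)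
    (f g : MvPolynomial (Fin n) ℝ)
    (hfg : ∀ z : Fin n → ℝ, (∀ p ∈ I, eval z p = 0) → eval z f = eval z g) :
    f - g ∈ I :=
  eq_on_finite_real_variety_sub_mem_radical_ideal_general I hrad hreal f g hfg
end
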